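/- Let τ be a θ-compatible stopping time such that 𝔼_x τ < ∞ for every x ∈ 𝐗, and assume QR(1) is bounded on 𝐗. Then S* and R* are reciprocal linear bijections between the set of finite P-invariant measures on 𝐗 and the set of finite Q-invariant measures on 𝐗, and these bijections preserve ergodicity: if μ is P-ergodic then S*μ is Q-ergodic, and if ν is Q-ergodic then R*ν is P-ergodic. -/

import Mathlib

open MeasureTheory Filter Set Topology
open scoped ENNReal NNReal ENat

noncomputable section

/-- The shift on path space. -/
def pshift {X : Type*} (ω : ℕ → X) : ℕ → X := fun n => ω (n + 1)

/-- The natural filtration on path space: the σ-algebra generated by the first `n+1`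
coordinates. -/
def pathFiltration (X : Type*) [MeasurableSpace X] (n : ℕ) : MeasurableSpace (ℕ → X) :=
  MeasurableSpace.comap (fun ω (i : Fin (n + 1)) => ω (i : ℕ)) inferInstance

/-- A Markov chain on `X`, given by the family of its path-space laws `ℙ_x`. -/
structure MarkovChain (X : Type*) [MeasurableSpace X] where
  law : X → Measure (ℕ → X)
  prob : ∀ x, IsProbabilityMeasure (law x)
  meas_law : Measurable law
  start : ∀ x, (law x).map (fun ω => ω 0) = Measure.dirac x
  markov : ∀ (x : X) (n : ℕ) (A : Set (ℕ → X)),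
      MeasurableSet[pathFiltration X n] A → ∀ g : (ℕ → X) → ℝ≥0∞, Measurable g →
      ∫⁻ ω in A, g (fun k => ω (k + n)) ∂law x = ∫⁻ ω in A, ∫⁻ η, g η ∂law (ω n) ∂law x

variable {X : Type*} [MeasurableSpace X]

/-- A stopping time on path space, with values in `ℕ∞`. -/
def IsPathStoppingTime (τ : (ℕ → X) → ℕ∞) : Prop :=
  ∀ n : ℕ, MeasurableSet[pathFiltration X n] {ω | τ ω = (n : ℕ∞)}

/-- `τ` is θ-compatible: `ℙ_x(τ = 0) = 0` and, almost everywhere, `τ ≥ 2` implies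
`τ ∘ θ = τ - 1`. -/
def ThetaCompatible (M : MarkovChain X) (τ : (ℕ → X) → ℕ∞) : Prop :=
  (∀ x, M.law x {ω | τ ω = 0} = 0) ∧
    ∀ x, ∀ᵐ ω ∂M.law x, 2 ≤ τ ω → τ (pshift ω) = τ ω - 1

/-- The Markov operator `P` on nonnegative functions: `Pf(x) = 𝔼_x f(X_1)`. -/
def Pop (M : MarkovChain X) (f : X → ℝ≥0∞) (x : X) : ℝ≥0∞ := ∫⁻ ω, f (ω 1) ∂M.law x

/-- The induced operator `Q`: `Qg(x) = ∫_{τ<∞} g(X_τ) dℙ_x`. -/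
def Qop (M : MarkovChain X) (τ : (ℕ → X) → ℕ∞) (g : X → ℝ≥0∞) (x : X) : ℝ≥0∞ :=
  ∫⁻ ω in {ω | τ ω ≠ ⊤}, g (ω (τ ω).toNat) ∂M.law x

/-- The operator `S`: `Sf(x) = ∫_{τ=1} f(X_1) dℙ_x`. -/
def Sop (M : MarkovChain X) (τ : (ℕ → X) → ℕ∞) (f : X → ℝ≥0∞) (x : X) : ℝ≥0∞ :=
  ∫⁻ ω in {ω | τ ω = 1}, f (ω 1) ∂M.law x

/-- The operator `R`: `Rf(x) = ∫_{τ<∞} (f(X_0) + ⋯ + f(X_{τ-1})) dℙ_x`. -/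
def Rop (M : MarkovChain X) (τ : (ℕ → X) → ℕ∞) (f : X → ℝ≥0∞) (x : X) : ℝ≥0∞ :=
  ∫⁻ ω in {ω | τ ω ≠ ⊤}, ∑ k ∈ Finset.range (τ ω).toNat, f (ω k) ∂M.law x

/-- `𝔼_x τ`, with values in `[0,∞]`. -/
def EtauE (M : MarkovChain X) (τ : (ℕ → X) → ℕ∞) (x : X) : ℝ≥0∞ :=
  ∫⁻ ω, (τ ω : ℝ≥0∞) ∂M.law x

/-- `μ` is `P`-invariant: `∫ Pf dμ = ∫ f dμ` for every bounded nonnegative borelian `f`. -/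
def PInvariant (M : MarkovChain X) (μ : Measure X) : Prop :=
  ∀ f : X → ℝ≥0∞, Measurable f → (∃ C : ℝ≥0∞, C ≠ ⊤ ∧ ∀ x, f x ≤ C) →
    ∫⁻ x, Pop M f x ∂μ = ∫⁻ x, f x ∂μ

/-- `ν` is `Q`-invariant: `∫ Qf dν = ∫ f dν` for every bounded nonnegative borelian `f`. -/
def QInvariant (M : MarkovChain X) (τ : (ℕ → X) → ℕ∞) (ν : Measure X) : Prop :=
  ∀ f : X → ℝ≥0∞, Measurable f → (∃ C : ℝ≥0∞, C ≠ ⊤ ∧ ∀ x, f x ≤ C) →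
    ∫⁻ x, Qop M τ f x ∂ν = ∫⁻ x, f x ∂ν

/-- `ν = S*μ`, i.e. `ν(A) = ∫ S𝟙_A dμ` for every borelian `A`. -/
def SstarEq (M : MarkovChain X) (τ : (ℕ → X) → ℕ∞) (μ ν : Measure X) : Prop :=
  ∀ A : Set X, MeasurableSet A → ν A = ∫⁻ x, Sop M τ (A.indicator 1) x ∂μ

/-- `m = R*ν`, i.e. `m(A) = ∫ R𝟙_A dν` for every borelian `A`. -/
def RstarEq (M : MarkovChain X) (τ : (ℕ → X) → ℕ∞) (ν m : Measure X) : Prop :=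
  ∀ A : Set X, MeasurableSet A → m A = ∫⁻ x, Rop M τ (A.indicator 1) x ∂ν

/-- the real-valued Markov operator -/
def Pr (M : MarkovChain X) (f : X → ℝ) (x : X) : ℝ := ∫ ω, f (ω 1) ∂M.law x

/-- the real-valued induced operator -/
def Qr (M : MarkovChain X) (τ : (ℕ → X) → ℕ∞) (g : X → ℝ) (x : X) : ℝ :=
  ∫ ω in {ω | τ ω ≠ ⊤}, g (ω (τ ω).toNat) ∂M.law x

/-- the real-valued operator `S` -/
def Sr (M : MarkovChain X) (τ : (ℕ → X) → ℕ∞) (f : X → ℝ) (x : X) : ℝ :=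
  ∫ ω in {ω | τ ω = 1}, f (ω 1) ∂M.law x

/-- the real-valued operator `R` -/
def Rr (M : MarkovChain X) (τ : (ℕ → X) → ℕ∞) (f : X → ℝ) (x : X) : ℝ :=
  ∫ ω in {ω | τ ω ≠ ⊤}, ∑ k ∈ Finset.range (τ ω).toNat, f (ω k) ∂M.law x

/-- `𝔼_x τ` as a real number. -/
def Etau (M : MarkovChain X) (τ : (ℕ → X) → ℕ∞) (x : X) : ℝ := (EtauE M τ x).toReal

/-- `B_u = sup (Pu - u) + 1`. -/
def Bu (M : MarkovChain X) (u : X → ℝ) : ℝ :=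
  sSup (Set.range fun x => Pr M u x - u x) + 1

/-- the weight `u - Pu + B_u` defining the space `𝓔_u`. -/
def wE (M : MarkovChain X) (u : X → ℝ) : X → ℝ := fun x => u x - Pr M u x + Bu M u

/-- `u` is a drift function: `u ≥ 1`, `u - Pu` is bounded below and, with
`B_u = sup (Pu - u) + 1`, the functions `Qu`, `𝔼τ/u` and `P(u-Pu+B_u)/(u-Pu+B_u)` are
bounded. -/
structure IsDrift (M : MarkovChain X) (τ : (ℕ → X) → ℕ∞) (u : X → ℝ) : Prop where
  meas : Measurable u
  one_le : ∀ x, 1 ≤ u x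
  int_one : ∀ x, Integrable (fun ω => u (ω 1)) (M.law x)
  bdd : BddAbove (Set.range fun x => Pr M u x - u x)
  etau_ne_top : ∀ x, EtauE M τ x ≠ ⊤
  qu_bdd : ∃ C : ℝ, ∀ x, Qr M τ u x ≤ C
  etau_div_bdd : ∃ C : ℝ, ∀ x, Etau M τ x ≤ C * u x
  pw_bdd : ∃ C : ℝ, ∀ x, Pr M (wE M u) x ≤ C * wE M u x

/-- membership in the weighted space `𝓕^p_v` : `f` is borelian and `|f| ≤ C v^{1/p}`. -/
def MemWp (v : X → ℝ) (p : ℝ) (f : X → ℝ) : Prop :=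
  Measurable f ∧ ∃ C : ℝ, ∀ x, |f x| ≤ C * v x ^ (1 / p)

/-- the norm of the weighted space `𝓕^p_v` : `‖f‖ = sup_x |f(x)|/v(x)^{1/p}`. -/
def normWp (v : X → ℝ) (p : ℝ) (f : X → ℝ) : ℝ := ⨆ x, |f x| / v x ^ (1 / p)

/-- ergodicity among a class of invariant measures: a finite nonzero invariant measure is
ergodic if it is not a nontrivial convex combination of two distinct invariant probability
measures. -/
def ErgodicAmong (Inv : Measure X → Prop) (μ : Measure X) : Prop :=
  μ ≠ 0 ∧ ∀ (ν₁ ν₂ : Measure X) (t : ℝ≥0∞), Inv ν₁ → Inv ν₂ →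
    IsProbabilityMeasure ν₁ → IsProbabilityMeasure ν₂ → 0 < t → t < 1 →
    μ = μ Set.univ • (t • ν₁ + (1 - t) • ν₂) → ν₁ = ν₂

/-!
Write `P = S + T` with `T f(x) = ∫_{τ>1} f(X_1) dℙ_x`. The Markov property and θ-compatibility
give `T^k f(x) = ∫_{τ>k} f(X_k) dℙ_x`, hence `R = ∑ₖ T^k` and `Q = ∑ₖ T^k S`, and therefore
`Q = S + TQ`, `RS = Q` and `RP + I = Q + R`. Integrated against an invariant measure, these give
the invariance of `S*μ` and of `R*ν` and `S*R*ν = ν`; `R*S*μ = μ` comes from telescoping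
`∫ T^n f dμ = ∫ S T^n f dμ + ∫ T^{n+1} f dμ`, whose remainder vanishes because `τ < ∞` a.s.
A finite invariant measure is ergodic iff each of its invariant summands is a multiple of it, and
this property is carried over by reciprocal linear bijections.
-/

lemma ENNReal.tsum_eq_of_add_succ_eq {a b : ℕ → ℝ≥0∞} (h : ∀ n, b n + a (n + 1) = a n)
    (ha : ⨅ n, a n = 0) : ∑' n, b n = a 0 := by
  have hpartial (N : ℕ) : ∑ n ∈ Finset.range N, b n + a N = a 0 := by
    induction N with
    | zero => simp
    | succ N ih => rw [Finset.sum_range_succ, add_assoc, h N, ih]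
  refine le_antisymm ?_ ?_
  · rw [ENNReal.tsum_eq_iSup_nat]
    exact iSup_le fun N => hpartial N ▸ le_self_add
  · calc a 0 ≤ ⨅ N, (∑' n, b n + a N) :=
          le_iInf fun N => hpartial N ▸ add_le_add_left (ENNReal.sum_le_tsum _) _
      _ = ∑' n, b n := by rw [← ENNReal.add_iInf, ha, add_zero]

section PathSpace

lemma pathFiltration_le (n : ℕ) :
    pathFiltration X n ≤ (inferInstance : MeasurableSpace (ℕ → X)) :=
  Measurable.comap_le (measurable_pi_lambda _ fun _ => measurable_pi_apply _)

lemma pathFiltration_mono {m n : ℕ} (h : m ≤ n) : pathFiltration X m ≤ pathFiltration X n := by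
  rintro A ⟨B, hB, rfl⟩
  exact ⟨(fun v : Fin (n + 1) → X => fun i : Fin (m + 1) => v (Fin.castLE (by omega) i)) ⁻¹' B,
    (measurable_pi_lambda _ fun _ => measurable_pi_apply _) hB, rfl⟩

variable {τ : (ℕ → X) → ℕ∞}

lemma IsPathStoppingTime.measurable (hst : IsPathStoppingTime τ) : Measurable τ := by
  refine measurable_to_countable' fun t => ?_
  induction t using ENat.recTopCoe with
  | top =>
    have : τ ⁻¹' {⊤} = (⋃ n : ℕ, τ ⁻¹' {(n : ℕ∞)})ᶜ := by
      ext ω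
      simp only [mem_preimage, mem_singleton_iff, mem_compl_iff, mem_iUnion, not_exists]
      induction τ ω using ENat.recTopCoe <;> simp
    rw [this]
    exact (MeasurableSet.iUnion fun n => pathFiltration_le n _ (hst n)).compl
  | coe n => exact pathFiltration_le n _ (hst n)

lemma IsPathStoppingTime.measurableSet_preimage (hst : IsPathStoppingTime τ) (s : Set ℕ∞) :
    MeasurableSet (τ ⁻¹' s) :=
  hst.measurable (.of_discrete)

lemma IsPathStoppingTime.measurableSet_eq (hst : IsPathStoppingTime τ) (t : ℕ∞) :
    MeasurableSet {ω | τ ω = t} :=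
  hst.measurableSet_preimage {t}

lemma IsPathStoppingTime.measurableSet_lt (hst : IsPathStoppingTime τ) (t : ℕ∞) :
    MeasurableSet {ω | t < τ ω} :=
  hst.measurableSet_preimage (Ioi t)

lemma IsPathStoppingTime.measurableSet_one_lt (hst : IsPathStoppingTime τ) :
    MeasurableSet[pathFiltration X 1] {ω | 1 < τ ω} := by
  have : {ω | 1 < τ ω} = ({ω | τ ω = ((0 : ℕ) : ℕ∞)} ∪ {ω | τ ω = ((1 : ℕ) : ℕ∞)})ᶜ := by
    ext ω
    simp only [mem_compl_iff, mem_union, mem_ofPred_eq, not_or, Nat.cast_zero, Nat.cast_one]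
    refine ⟨fun h => ⟨(zero_lt_one.trans h).ne', h.ne'⟩, fun ⟨h0, h1⟩ => ?_⟩
    exact lt_of_le_of_ne (Order.one_le_iff_ne_zero.mpr h0) (Ne.symm h1)
  rw [this]
  exact ((pathFiltration_mono zero_le_one _ (hst 0)).union (hst 1)).compl

variable {M : MarkovChain X}

lemma ae_ne_top_of_EtauE_ne_top (hst : IsPathStoppingTime τ) {x : X} (hτ : EtauE M τ x ≠ ⊤) :
    ∀ᵐ ω ∂M.law x, τ ω ≠ ⊤ := by
  filter_upwards [ae_lt_top (Measurable.of_discrete.comp hst.measurable) hτ] with ω hω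
  exact (ENat.toENNReal_lt_top.mp hω).ne

lemma ThetaCompatible.ae_ne_zero (hθ : ThetaCompatible M τ) (x : X) :
    ∀ᵐ ω ∂M.law x, τ ω ≠ 0 :=
  measure_eq_zero_iff_ae_notMem.mp (hθ.1 x)

lemma ThetaCompatible.ae_shift (hθ : ThetaCompatible M τ) (x : X) :
    ∀ᵐ ω ∂M.law x, 1 < τ ω → τ (pshift ω) + 1 = τ ω := by
  filter_upwards [hθ.2 x] with ω hω h1
  rw [hω (ENat.add_one_le_iff ENat.one_ne_top |>.mpr h1), tsub_add_cancel_of_le h1.le]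

end PathSpace

namespace MarkovChain

instance (M : MarkovChain X) (x : X) : IsProbabilityMeasure (M.law x) := M.prob x

/-- `T^k`, where `T = P - S`. -/
def Tpow (M : MarkovChain X) (τ : (ℕ → X) → ℕ∞) (k : ℕ) (f : X → ℝ≥0∞) (x : X) : ℝ≥0∞ :=
  ∫⁻ ω in {ω | (k : ℕ∞) < τ ω}, f (ω k) ∂M.law x

def Qat (M : MarkovChain X) (τ : (ℕ → X) → ℕ∞) (n : ℕ) (f : X → ℝ≥0∞) (x : X) : ℝ≥0∞ :=
  ∫⁻ ω in {ω | τ ω = n}, f (ω n) ∂M.law x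

variable {M : MarkovChain X} {τ : (ℕ → X) → ℕ∞}

section SetIntegrals

variable {E : Set (ℕ → X)}

lemma measurable_setLIntegral_law (hE : MeasurableSet E) {h : (ℕ → X) → ℝ≥0∞}
    (hh : Measurable h) : Measurable fun x => ∫⁻ ω in E, h ω ∂M.law x := by
  simp_rw [← lintegral_indicator hE]
  exact (Measure.measurable_lintegral (hh.indicator hE)).comp M.meas_law

lemma setLIntegral_law_le {g : (ℕ → X) → X} {f : X → ℝ≥0∞} {C : ℝ≥0∞} (hf : ∀ y, f y ≤ C)
    (x : X) : ∫⁻ ω in E, f (g ω) ∂M.law x ≤ C := by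
  calc ∫⁻ ω in E, f (g ω) ∂M.law x ≤ ∫⁻ _ in E, C ∂M.law x := lintegral_mono fun ω => hf _
    _ = C * M.law x E := setLIntegral_const _ _
    _ ≤ C := mul_le_of_le_one_right' prob_le_one

/-- The Markov property at time `1`. -/
lemma setLIntegral_law_shift {A E' : Set (ℕ → X)} (hA : MeasurableSet[pathFiltration X 1] A)
    (hE : MeasurableSet E) (hE' : MeasurableSet E') (hE'A : E' ⊆ A) {x : X}
    (hshift : ∀ᵐ ω ∂M.law x, ω ∈ A → (pshift ω ∈ E ↔ ω ∈ E')) {f : X → ℝ≥0∞}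
    (hf : Measurable f) (n : ℕ) :
    ∫⁻ ω in A, ∫⁻ η in E, f (η n) ∂M.law (ω 1) ∂M.law x = ∫⁻ ω in E', f (ω (n + 1)) ∂M.law x := by
  have hg : Measurable (E.indicator fun η => f (η n)) :=
    (hf.comp (measurable_pi_apply n)).indicator hE
  simp_rw [← lintegral_indicator hE]
  rw [← M.markov x 1 A hA _ hg, ← Measure.restrict_restrict_of_subset hE'A,
    ← lintegral_indicator hE', ← setLIntegral_congr_fun_ae (pathFiltration_le 1 _ hA)]
  filter_upwards [hshift] with ω hω hωA
  have hω' : (fun k => ω (k + 1)) ∈ E ↔ ω ∈ E' := hω hωA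
  by_cases h : ω ∈ E' <;> simp [indicator, hω', h]

end SetIntegrals

section Operators

variable {f : X → ℝ≥0∞}

lemma measurable_Pop (hf : Measurable f) : Measurable (Pop M f) :=
  (Measure.measurable_lintegral (hf.comp (measurable_pi_apply 1))).comp M.meas_law

lemma measurable_Tpow (hst : IsPathStoppingTime τ) (k : ℕ) (hf : Measurable f) :
    Measurable (Tpow M τ k f) :=
  measurable_setLIntegral_law (hst.measurableSet_lt k) (hf.comp (measurable_pi_apply k))

lemma Sop_eq_Qat_one : Sop M τ f = Qat M τ 1 f := by
  ext x
  simp [Sop, Qat]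

lemma measurable_Sop (hst : IsPathStoppingTime τ) (hf : Measurable f) : Measurable (Sop M τ f) :=
  measurable_setLIntegral_law (hst.measurableSet_eq 1) (hf.comp (measurable_pi_apply 1))

lemma Tpow_zero (hθ : ThetaCompatible M τ) (hf : Measurable f) : Tpow M τ 0 f = f := by
  ext x
  have hpos : {ω | ((0 : ℕ) : ℕ∞) < τ ω} =ᵐ[M.law x] univ := by
    refine eventuallyEq_univ.mpr ?_
    filter_upwards [hθ.ae_ne_zero x] with ω hω
    simpa [pos_iff_ne_zero] using hω
  rw [Tpow, setLIntegral_congr hpos, Measure.restrict_univ,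
    ← lintegral_map hf (measurable_pi_apply 0), M.start x, lintegral_dirac' x hf]

lemma Pop_eq_Sop_add_Tpow_one (hst : IsPathStoppingTime τ) (hθ : ThetaCompatible M τ)
    (f : X → ℝ≥0∞) (x : X) : Pop M f x = Sop M τ f x + Tpow M τ 1 f x := by
  have hS : MeasurableSet {ω | τ ω = 1} := hst.measurableSet_eq 1
  have hT : {ω | τ ω = 1}ᶜ =ᵐ[M.law x] {ω | ((1 : ℕ) : ℕ∞) < τ ω} := by
    filter_upwards [hθ.ae_ne_zero x] with ω hω
    simp only [eq_iff_iff, Nat.cast_one]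
    exact ⟨fun h1 => lt_of_le_of_ne (Order.one_le_iff_ne_zero.mpr hω) (Ne.symm h1), ne_of_gt⟩
  rw [Pop, ← lintegral_add_compl _ hS, Tpow, ← setLIntegral_congr hT]
  rfl

lemma Tpow_one_Tpow (hst : IsPathStoppingTime τ) (hθ : ThetaCompatible M τ) (hf : Measurable f)
    (n : ℕ) (x : X) : Tpow M τ 1 (Tpow M τ n f) x = Tpow M τ (n + 1) f x := by
  refine setLIntegral_law_shift hst.measurableSet_one_lt (hst.measurableSet_lt n)
    (hst.measurableSet_lt ((n + 1 : ℕ) : ℕ∞)) ?_ ?_ hf n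
  · intro ω (hω : ((n + 1 : ℕ) : ℕ∞) < τ ω)
    exact lt_of_le_of_lt (by exact_mod_cast Nat.le_add_left 1 n) hω
  · filter_upwards [hθ.ae_shift x] with ω hω h1
    show (n : ℕ∞) < τ (pshift ω) ↔ ((n + 1 : ℕ) : ℕ∞) < τ ω
    rw [← hω h1]
    push_cast
    exact (ENat.add_lt_add_iff_right ENat.one_ne_top).symm

lemma Tpow_one_Qat (hst : IsPathStoppingTime τ) (hθ : ThetaCompatible M τ) (hf : Measurable f)
    {m : ℕ} (hm : 1 ≤ m) (x : X) : Tpow M τ 1 (Qat M τ m f) x = Qat M τ (m + 1) f x := by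
  refine setLIntegral_law_shift hst.measurableSet_one_lt (hst.measurableSet_eq m)
    (hst.measurableSet_eq ((m + 1 : ℕ) : ℕ∞)) ?_ ?_ hf m
  · intro ω (hω : τ ω = ((m + 1 : ℕ) : ℕ∞))
    show ((1 : ℕ) : ℕ∞) < τ ω
    rw [hω]
    exact_mod_cast Nat.lt_add_one_of_le hm
  · filter_upwards [hθ.ae_shift x] with ω hω h1
    show τ (pshift ω) = m ↔ τ ω = ((m + 1 : ℕ) : ℕ∞)
    rw [← hω h1]
    push_cast
    exact (WithTop.add_right_inj ENat.one_ne_top).symm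

end Operators

section Series

variable {f : X → ℝ≥0∞}

lemma Tpow_Tpow_one (hst : IsPathStoppingTime τ) (hθ : ThetaCompatible M τ) (hf : Measurable f)
    (n : ℕ) : Tpow M τ n (Tpow M τ 1 f) = Tpow M τ (n + 1) f := by
  induction n with
  | zero => exact Tpow_zero hθ (measurable_Tpow hst 1 hf)
  | succ n ih =>
    ext x
    rw [← Tpow_one_Tpow hst hθ (measurable_Tpow hst 1 hf), ih, Tpow_one_Tpow hst hθ hf]

lemma Qat_succ_eq_Tpow_Sop (hst : IsPathStoppingTime τ) (hθ : ThetaCompatible M τ)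
    (hf : Measurable f) (n : ℕ) : Qat M τ (n + 1) f = Tpow M τ n (Sop M τ f) := by
  induction n with
  | zero => rw [Tpow_zero hθ (measurable_Sop hst hf), Sop_eq_Qat_one]
  | succ n ih =>
    ext x
    rw [← Tpow_one_Qat hst hθ hf (Nat.le_add_left 1 n), ih,
      Tpow_one_Tpow hst hθ (measurable_Sop hst hf)]

lemma Qop_eq_tsum_Qat (hst : IsPathStoppingTime τ) (hθ : ThetaCompatible M τ) (f : X → ℝ≥0∞)
    (x : X) : Qop M τ f x = ∑' n : ℕ, Qat M τ (n + 1) f x := by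
  have hmeas (n : ℕ) : MeasurableSet {ω | τ ω = ((n + 1 : ℕ) : ℕ∞)} :=
    hst.measurableSet_eq ((n + 1 : ℕ) : ℕ∞)
  have hdisj : Pairwise (Function.onFun Disjoint fun n : ℕ => {ω | τ ω = ((n + 1 : ℕ) : ℕ∞)}) := by
    intro m n hmn
    refine Set.disjoint_left.mpr fun ω (hm : τ ω = _) (hn : τ ω = _) => hmn ?_
    exact Nat.succ_injective (ENat.natCast_inj.mp (hm.symm.trans hn))
  have hfin : {ω | τ ω ≠ ⊤} =ᵐ[M.law x] ⋃ n : ℕ, {ω | τ ω = ((n + 1 : ℕ) : ℕ∞)} := by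
    refine eventuallyEq_set.mpr ?_
    filter_upwards [hθ.ae_ne_zero x] with ω hω
    simp only [mem_iUnion, mem_ofPred_eq]
    generalize τ ω = t at hω ⊢
    induction t using ENat.recTopCoe with
    | top => exact iff_of_false (fun h => h rfl) fun ⟨n, h⟩ => ENat.natCast_ne_top _ h.symm
    | coe m =>
      obtain ⟨n, rfl⟩ := Nat.exists_eq_succ_of_ne_zero (by exact_mod_cast hω)
      exact iff_of_true (ENat.natCast_ne_top _) ⟨n, rfl⟩
  rw [Qop, setLIntegral_congr hfin, Measure.restrict_iUnion hdisj hmeas, lintegral_sum_measure]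
  refine tsum_congr fun n => setLIntegral_congr_fun (hmeas n) fun ω (hω : τ ω = _) => ?_
  rw [hω, ENat.toNat_natCast]

lemma Rop_eq_tsum_Tpow (hst : IsPathStoppingTime τ) {x : X} (hτ : EtauE M τ x ≠ ⊤)
    (hf : Measurable f) : Rop M τ f x = ∑' k : ℕ, Tpow M τ k f x := by
  have hfin := ae_ne_top_of_EtauE_ne_top hst hτ
  have hmeas (k : ℕ) : MeasurableSet {ω | (k : ℕ∞) < τ ω} := hst.measurableSet_lt k
  have hfk (k : ℕ) : Measurable fun ω : ℕ → X => f (ω k) := hf.comp (measurable_pi_apply k)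
  have hsum : ∀ᵐ ω ∂M.law x, ∑ k ∈ Finset.range (τ ω).toNat, f (ω k) =
      ∑' k : ℕ, {ω | (k : ℕ∞) < τ ω}.indicator (fun ω => f (ω k)) ω := by
    filter_upwards [hfin] with ω hω
    obtain ⟨m, hm⟩ := ENat.ne_top_iff_exists.mp hω
    have hlt (k : ℕ) : ω ∈ {ω | (k : ℕ∞) < τ ω} ↔ k < m := by
      rw [mem_ofPred_eq, ← hm, Nat.cast_lt]
    rw [← hm, ENat.toNat_natCast, tsum_eq_sum (s := Finset.range m) fun k hk =>
      indicator_of_notMem (fun h => hk (Finset.mem_range.mpr ((hlt k).mp h))) _]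
    exact Finset.sum_congr rfl fun k hk =>
      (indicator_of_mem ((hlt k).mpr (Finset.mem_range.mp hk)) fun ω : ℕ → X => f (ω k)).symm
  rw [Rop, setLIntegral_congr (eventuallyEq_univ.mpr hfin), Measure.restrict_univ,
    lintegral_congr_ae hsum, lintegral_tsum fun k => ((hfk k).indicator (hmeas k)).aemeasurable]
  exact tsum_congr fun k => lintegral_indicator (hmeas k) _

lemma Qop_eq_tsum_Tpow_Sop (hst : IsPathStoppingTime τ) (hθ : ThetaCompatible M τ)
    (hf : Measurable f) (x : X) : Qop M τ f x = ∑' n : ℕ, Tpow M τ n (Sop M τ f) x := by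
  simp_rw [Qop_eq_tsum_Qat hst hθ, Qat_succ_eq_Tpow_Sop hst hθ hf]

lemma measurable_Qop (hst : IsPathStoppingTime τ) (hθ : ThetaCompatible M τ) (hf : Measurable f) :
    Measurable (Qop M τ f) := by
  simp_rw [funext (Qop_eq_tsum_Tpow_Sop hst hθ hf (M := M))]
  exact .tsum fun n => measurable_Tpow hst n (measurable_Sop hst hf)

lemma measurable_Rop (hst : IsPathStoppingTime τ) (hτ : ∀ x, EtauE M τ x ≠ ⊤) (hf : Measurable f) :
    Measurable (Rop M τ f) := by
  simp_rw [funext fun x => Rop_eq_tsum_Tpow hst (hτ x) hf]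
  exact .tsum fun k => measurable_Tpow hst k hf

lemma Tpow_tsum (k : ℕ) {g : ℕ → X → ℝ≥0∞} (hg : ∀ n, Measurable (g n)) (x : X) :
    Tpow M τ k (fun y => ∑' n, g n y) x = ∑' n, Tpow M τ k (g n) x :=
  lintegral_tsum fun n => ((hg n).comp (measurable_pi_apply k)).aemeasurable

lemma Sop_tsum {g : ℕ → X → ℝ≥0∞} (hg : ∀ n, Measurable (g n)) (x : X) :
    Sop M τ (fun y => ∑' n, g n y) x = ∑' n, Sop M τ (g n) x :=
  lintegral_tsum fun n => ((hg n).comp (measurable_pi_apply 1)).aemeasurable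

lemma Tpow_add (k : ℕ) {g : X → ℝ≥0∞} (hf : Measurable f) (x : X) :
    Tpow M τ k (f + g) x = Tpow M τ k f x + Tpow M τ k g x :=
  lintegral_add_left (hf.comp (measurable_pi_apply k)) _

lemma Qop_eq_Sop_add_Tpow_one_Qop (hst : IsPathStoppingTime τ) (hθ : ThetaCompatible M τ)
    (hf : Measurable f) (x : X) : Qop M τ f x = Sop M τ f x + Tpow M τ 1 (Qop M τ f) x := by
  have hS := measurable_Sop (M := M) hst hf
  calc Qop M τ f x = ∑' n, Tpow M τ n (Sop M τ f) x := Qop_eq_tsum_Tpow_Sop hst hθ hf x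
    _ = Tpow M τ 0 (Sop M τ f) x + ∑' n, Tpow M τ (n + 1) (Sop M τ f) x :=
      tsum_eq_zero_add' ENNReal.summable
    _ = Sop M τ f x + ∑' n, Tpow M τ 1 (Tpow M τ n (Sop M τ f)) x := by
      simp_rw [Tpow_zero hθ hS, Tpow_one_Tpow hst hθ hS]
    _ = Sop M τ f x + Tpow M τ 1 (Qop M τ f) x := by
      rw [funext (Qop_eq_tsum_Tpow_Sop hst hθ hf), Tpow_tsum 1 fun n => measurable_Tpow hst n hS]

lemma Rop_Sop (hst : IsPathStoppingTime τ) (hθ : ThetaCompatible M τ) {x : X}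
    (hτ : EtauE M τ x ≠ ⊤) (hf : Measurable f) : Rop M τ (Sop M τ f) x = Qop M τ f x := by
  rw [Rop_eq_tsum_Tpow hst hτ (measurable_Sop hst hf), Qop_eq_tsum_Tpow_Sop hst hθ hf]

lemma Rop_Pop_add (hst : IsPathStoppingTime τ) (hθ : ThetaCompatible M τ) {x : X}
    (hτ : EtauE M τ x ≠ ⊤) (hf : Measurable f) :
    Rop M τ (Pop M f) x + f x = Qop M τ f x + Rop M τ f x := by
  have hS := measurable_Sop (M := M) hst hf
  have hP : Pop M f = Sop M τ f + Tpow M τ 1 f := funext (Pop_eq_Sop_add_Tpow_one hst hθ f)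
  calc Rop M τ (Pop M f) x + f x = (∑' n, Tpow M τ n (Sop M τ f + Tpow M τ 1 f) x) + f x := by
        rw [Rop_eq_tsum_Tpow hst hτ (measurable_Pop hf), hP]
    _ = (∑' n, Tpow M τ n (Sop M τ f) x + ∑' n, Tpow M τ (n + 1) f x) + f x := by
        simp_rw [Tpow_add _ hS, Tpow_Tpow_one hst hθ hf]
        rw [ENNReal.tsum_add]
    _ = Qop M τ f x + (Tpow M τ 0 f x + ∑' n, Tpow M τ (n + 1) f x) := by
        rw [Qop_eq_tsum_Tpow_Sop hst hθ hf, Tpow_zero hθ hf]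
        ring
    _ = Qop M τ f x + Rop M τ f x := by
        rw [← tsum_eq_zero_add' (f := fun n => Tpow M τ n f x) ENNReal.summable,
          Rop_eq_tsum_Tpow hst hτ hf]

end Series

section DualMeasures

def stoppedLaw (M : MarkovChain X) (E : Set (ℕ → X)) (n : ℕ) (x : X) : Measure X :=
  ((M.law x).restrict E).map (· n)

def sStar (M : MarkovChain X) (τ : (ℕ → X) → ℕ∞) (μ : Measure X) : Measure X :=
  μ.bind (stoppedLaw M {ω | τ ω = 1} 1)

def rStar (M : MarkovChain X) (τ : (ℕ → X) → ℕ∞) (ν : Measure X) : Measure X :=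
  Measure.sum fun k : ℕ => ν.bind (stoppedLaw M {ω | (k : ℕ∞) < τ ω} k)

variable {E : Set (ℕ → X)} {f : X → ℝ≥0∞}

lemma measurable_stoppedLaw (hE : MeasurableSet E) (n : ℕ) : Measurable (stoppedLaw M E n) := by
  have hn : Measurable fun ω : ℕ → X => ω n := measurable_pi_apply n
  refine Measure.measurable_of_measurable_coe _ fun A hA => ?_
  have hA' := hn hA
  simp_rw [stoppedLaw, Measure.map_apply hn hA, Measure.restrict_apply hA']
  exact (Measure.measurable_coe (hA'.inter hE)).comp M.meas_law

lemma lintegral_bind_stoppedLaw (hE : MeasurableSet E) (n : ℕ) (μ : Measure X)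
    (hf : Measurable f) :
    ∫⁻ y, f y ∂μ.bind (stoppedLaw M E n) = ∫⁻ x, ∫⁻ ω in E, f (ω n) ∂M.law x ∂μ := by
  rw [Measure.lintegral_bind (measurable_stoppedLaw hE n).aemeasurable hf.aemeasurable]
  simp_rw [stoppedLaw, lintegral_map hf (measurable_pi_apply (X := fun _ : ℕ => X) n)]

lemma lintegral_sStar (hst : IsPathStoppingTime τ) (μ : Measure X) (hf : Measurable f) :
    ∫⁻ y, f y ∂sStar M τ μ = ∫⁻ x, Sop M τ f x ∂μ :=
  lintegral_bind_stoppedLaw (hst.measurableSet_eq 1) 1 μ hf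

lemma lintegral_rStar (hst : IsPathStoppingTime τ) (hτ : ∀ x, EtauE M τ x ≠ ⊤) (ν : Measure X)
    (hf : Measurable f) : ∫⁻ y, f y ∂rStar M τ ν = ∫⁻ x, Rop M τ f x ∂ν := by
  calc ∫⁻ y, f y ∂rStar M τ ν = ∑' k, ∫⁻ x, Tpow M τ k f x ∂ν := by
        rw [rStar, lintegral_sum_measure]
        exact tsum_congr fun k => lintegral_bind_stoppedLaw (hst.measurableSet_lt k) k ν hf
    _ = ∫⁻ x, Rop M τ f x ∂ν := by
        rw [← lintegral_tsum fun k => (measurable_Tpow hst k hf).aemeasurable]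
        exact lintegral_congr fun x => (Rop_eq_tsum_Tpow hst (hτ x) hf).symm

lemma sstarEq_iff (hst : IsPathStoppingTime τ) {μ ν : Measure X} :
    SstarEq M τ μ ν ↔ ν = sStar M τ μ := by
  have h (A : Set X) (hA : MeasurableSet A) :
      sStar M τ μ A = ∫⁻ x, Sop M τ (A.indicator 1) x ∂μ := by
    rw [← lintegral_indicator_one hA, lintegral_sStar hst μ (measurable_one.indicator hA)]
  exact ⟨fun hS => Measure.ext fun A hA => (hS A hA).trans (h A hA).symm,
    fun hν A hA => hν ▸ h A hA⟩

lemma rstarEq_iff (hst : IsPathStoppingTime τ) (hτ : ∀ x, EtauE M τ x ≠ ⊤) {ν μ : Measure X} :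
    RstarEq M τ ν μ ↔ μ = rStar M τ ν := by
  have h (A : Set X) (hA : MeasurableSet A) :
      rStar M τ ν A = ∫⁻ x, Rop M τ (A.indicator 1) x ∂ν := by
    rw [← lintegral_indicator_one hA, lintegral_rStar hst hτ ν (measurable_one.indicator hA)]
  exact ⟨fun hR => Measure.ext fun A hA => (hR A hA).trans (h A hA).symm,
    fun hμ A hA => hμ ▸ h A hA⟩

lemma sStar_add (hst : IsPathStoppingTime τ) (μ₁ μ₂ : Measure X) :
    sStar M τ (μ₁ + μ₂) = sStar M τ μ₁ + sStar M τ μ₂ :=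
  Measure.ext_of_lintegral _ fun f hf => by
    simp only [lintegral_add_measure, lintegral_sStar hst _ hf]

lemma sStar_smul (hst : IsPathStoppingTime τ) (c : ℝ≥0∞) (μ : Measure X) :
    sStar M τ (c • μ) = c • sStar M τ μ :=
  Measure.ext_of_lintegral _ fun f hf => by
    simp only [lintegral_smul_measure, lintegral_sStar hst _ hf]

lemma rStar_add (hst : IsPathStoppingTime τ) (hτ : ∀ x, EtauE M τ x ≠ ⊤) (ν₁ ν₂ : Measure X) :
    rStar M τ (ν₁ + ν₂) = rStar M τ ν₁ + rStar M τ ν₂ :=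
  Measure.ext_of_lintegral _ fun f hf => by
    simp only [lintegral_add_measure, lintegral_rStar hst hτ _ hf]

lemma rStar_smul (hst : IsPathStoppingTime τ) (hτ : ∀ x, EtauE M τ x ≠ ⊤) (c : ℝ≥0∞)
    (ν : Measure X) : rStar M τ (c • ν) = c • rStar M τ ν :=
  Measure.ext_of_lintegral _ fun f hf => by
    simp only [lintegral_smul_measure, lintegral_rStar hst hτ _ hf]

lemma isFiniteMeasure_sStar (hst : IsPathStoppingTime τ) (μ : Measure X) [IsFiniteMeasure μ] :
    IsFiniteMeasure (sStar M τ μ) := by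
  refine ⟨?_⟩
  rw [← lintegral_one, lintegral_sStar hst μ measurable_const]
  calc ∫⁻ x, Sop M τ (fun _ => 1) x ∂μ ≤ ∫⁻ _, 1 ∂μ :=
        lintegral_mono fun x => setLIntegral_law_le (g := fun ω => ω 1) (fun _ => le_rfl) x
    _ < ⊤ := by simp

end DualMeasures

section Invariance

variable {μ ν : Measure X} {f : X → ℝ≥0∞}

lemma _root_.PInvariant.smul (hμ : PInvariant M μ) (c : ℝ≥0∞) : PInvariant M (c • μ) := by
  intro f hf hbdd
  rw [lintegral_smul_measure, lintegral_smul_measure, hμ f hf hbdd]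

lemma _root_.QInvariant.smul (hν : QInvariant M τ ν) (c : ℝ≥0∞) : QInvariant M τ (c • ν) := by
  intro f hf hbdd
  rw [lintegral_smul_measure, lintegral_smul_measure, hν f hf hbdd]

lemma _root_.PInvariant.lintegral_Sop_add_lintegral_Tpow_one (hst : IsPathStoppingTime τ)
    (hθ : ThetaCompatible M τ) (hμ : PInvariant M μ) (hf : Measurable f)
    (hbdd : ∃ C : ℝ≥0∞, C ≠ ⊤ ∧ ∀ y, f y ≤ C) :
    ∫⁻ x, Sop M τ f x ∂μ + ∫⁻ x, Tpow M τ 1 f x ∂μ = ∫⁻ x, f x ∂μ := by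
  rw [← lintegral_add_left (measurable_Sop hst hf), ← hμ f hf hbdd]
  exact lintegral_congr fun x => (Pop_eq_Sop_add_Tpow_one hst hθ f x).symm

/-- `Q`-invariance is only assumed for bounded functions; truncation extends it as an
inequality. -/
lemma _root_.QInvariant.lintegral_le_lintegral_Qop (hν : QInvariant M τ ν) (hf : Measurable f) :
    ∫⁻ x, f x ∂ν ≤ ∫⁻ x, Qop M τ f x ∂ν := by
  have htrunc (y : X) : ⨆ N : ℕ, min (f y) N = f y := by
    rw [← inf_iSup_eq, ENNReal.iSup_natCast, inf_top_eq]
  calc ∫⁻ x, f x ∂ν = ⨆ N : ℕ, ∫⁻ x, min (f x) N ∂ν := by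
        simp_rw [← lintegral_iSup (fun N => hf.min measurable_const)
          fun N₁ N₂ h x => min_le_min_left _ (Nat.cast_le.mpr h), htrunc]
    _ = ⨆ N : ℕ, ∫⁻ x, Qop M τ (fun y => min (f y) N) x ∂ν := by
        congr 1 with N
        exact (hν _ (hf.min measurable_const) ⟨N, ENNReal.natCast_ne_top N,
          fun y => min_le_right _ _⟩).symm
    _ ≤ ∫⁻ x, Qop M τ f x ∂ν :=
        iSup_le fun N => lintegral_mono fun x => lintegral_mono fun ω => min_le_left _ _

lemma isFiniteMeasure_rStar (hst : IsPathStoppingTime τ) (hτ : ∀ x, EtauE M τ x ≠ ⊤)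
    (hQR : ∃ C : ℝ≥0, ∀ x, Qop M τ (Rop M τ 1) x ≤ C) [IsFiniteMeasure ν]
    (hν : QInvariant M τ ν) : IsFiniteMeasure (rStar M τ ν) := by
  obtain ⟨C, hC⟩ := hQR
  refine ⟨?_⟩
  rw [← lintegral_one, lintegral_rStar hst hτ ν measurable_const]
  calc ∫⁻ x, Rop M τ 1 x ∂ν ≤ ∫⁻ x, Qop M τ (Rop M τ 1) x ∂ν :=
        hν.lintegral_le_lintegral_Qop (measurable_Rop hst hτ measurable_const)
    _ ≤ ∫⁻ _, (C : ℝ≥0∞) ∂ν := lintegral_mono hC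
    _ < ⊤ := by simp [lintegral_const, ENNReal.mul_lt_top]

end Invariance

section Correspondence

variable {μ ν : Measure X}

lemma iInf_law_lt_eq_zero (hst : IsPathStoppingTime τ) {x : X} (hτ : EtauE M τ x ≠ ⊤) :
    ⨅ n : ℕ, M.law x {ω | (n : ℕ∞) < τ ω} = 0 := by
  have hanti : Antitone fun n : ℕ => {ω | (n : ℕ∞) < τ ω} :=
    fun m n hmn ω (hω : (n : ℕ∞) < τ ω) => lt_of_le_of_lt (Nat.cast_le.mpr hmn) hω
  rw [← hanti.measure_iInter (fun n => (hst.measurableSet_lt n).nullMeasurableSet)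
    ⟨0, measure_ne_top _ _⟩]
  refine measure_mono_null (fun ω hω => ?_) (ae_iff.mp (ae_ne_top_of_EtauE_ne_top hst hτ))
  exact not_not.mpr (ENat.eq_top_iff_forall_gt.mpr (mem_iInter.mp hω))

lemma iInf_lintegral_Tpow_eq_zero (hst : IsPathStoppingTime τ) (hτ : ∀ x, EtauE M τ x ≠ ⊤)
    [IsFiniteMeasure μ] {f : X → ℝ≥0∞} (hf : ∀ y, f y ≤ 1) :
    ⨅ n, ∫⁻ x, Tpow M τ n f x ∂μ = 0 := by
  have hmeas (n : ℕ) : Measurable fun x => M.law x {ω | (n : ℕ∞) < τ ω} :=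
    (Measure.measurable_coe (hst.measurableSet_lt n)).comp M.meas_law
  have hanti : Antitone fun (n : ℕ) x => M.law x {ω | (n : ℕ∞) < τ ω} :=
    fun m n hmn x => measure_mono fun ω (hω : (n : ℕ∞) < τ ω) =>
      lt_of_le_of_lt (Nat.cast_le.mpr hmn) hω
  refine le_antisymm ?_ bot_le
  calc ⨅ n, ∫⁻ x, Tpow M τ n f x ∂μ ≤ ⨅ n : ℕ, ∫⁻ x, M.law x {ω | (n : ℕ∞) < τ ω} ∂μ :=
        iInf_mono fun n => lintegral_mono fun x =>
          (lintegral_mono fun ω => hf _).trans_eq (setLIntegral_one _)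
    _ = 0 := by
        have hfin : ∫⁻ x, M.law x {ω | ((0 : ℕ) : ℕ∞) < τ ω} ∂μ ≠ ⊤ :=
          ((lintegral_mono fun x => prob_le_one).trans_lt
            (lintegral_const_lt_top ENNReal.one_ne_top)).ne
        rw [← lintegral_iInf hmeas hanti hfin]
        simp [iInf_law_lt_eq_zero hst (hτ _)]

lemma _root_.PInvariant.qInvariant_sStar (hst : IsPathStoppingTime τ) (hθ : ThetaCompatible M τ)
    [IsFiniteMeasure μ] (hμ : PInvariant M μ) : QInvariant M τ (sStar M τ μ) := by
  rintro g hg ⟨C, hC, hgC⟩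
  have hQg := measurable_Qop hst hθ hg
  have hQgC : ∀ y, Qop M τ g y ≤ C := setLIntegral_law_le hgC
  have hfin : ∫⁻ x, Tpow M τ 1 (Qop M τ g) x ∂μ ≠ ⊤ :=
    ((lintegral_mono (setLIntegral_law_le hQgC)).trans_lt (lintegral_const_lt_top hC)).ne
  rw [lintegral_sStar hst μ hQg, lintegral_sStar hst μ hg, ← ENNReal.add_left_inj hfin,
    hμ.lintegral_Sop_add_lintegral_Tpow_one hst hθ hQg ⟨C, hC, hQgC⟩,
    ← lintegral_add_left (measurable_Sop hst hg)]
  exact lintegral_congr fun x => Qop_eq_Sop_add_Tpow_one_Qop hst hθ hg x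

lemma _root_.PInvariant.rStar_sStar (hst : IsPathStoppingTime τ) (hθ : ThetaCompatible M τ)
    (hτ : ∀ x, EtauE M τ x ≠ ⊤) [IsFiniteMeasure μ] (hμ : PInvariant M μ) :
    rStar M τ (sStar M τ μ) = μ := by
  refine Measure.ext fun A hA => ?_
  set f : X → ℝ≥0∞ := A.indicator 1
  have hf : Measurable f := measurable_one.indicator hA
  have hf1 (y : X) : f y ≤ 1 := indicator_le_self A 1 y
  have hTf (n : ℕ) := measurable_Tpow (M := M) hst n hf
  have hstep (n : ℕ) : ∫⁻ x, Sop M τ (Tpow M τ n f) x ∂μ + ∫⁻ x, Tpow M τ (n + 1) f x ∂μ =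
      ∫⁻ x, Tpow M τ n f x ∂μ := by
    simp_rw [← Tpow_one_Tpow hst hθ hf n]
    exact hμ.lintegral_Sop_add_lintegral_Tpow_one hst hθ (hTf n)
      ⟨1, ENNReal.one_ne_top, setLIntegral_law_le hf1⟩
  calc rStar M τ (sStar M τ μ) A = ∫⁻ x, Sop M τ (Rop M τ f) x ∂μ := by
        rw [← lintegral_indicator_one hA, lintegral_rStar hst hτ _ hf,
          lintegral_sStar hst μ (measurable_Rop hst hτ hf)]
    _ = ∑' n, ∫⁻ x, Sop M τ (Tpow M τ n f) x ∂μ := by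
        rw [← lintegral_tsum fun n => (measurable_Sop hst (hTf n)).aemeasurable]
        refine lintegral_congr fun x => ?_
        have hR : Rop M τ f = fun y => ∑' n, Tpow M τ n f y :=
          funext fun y => Rop_eq_tsum_Tpow hst (hτ y) hf
        rw [hR, Sop_tsum hTf]
    _ = ∫⁻ x, Tpow M τ 0 f x ∂μ :=
        ENNReal.tsum_eq_of_add_succ_eq hstep (iInf_lintegral_Tpow_eq_zero hst hτ hf1)
    _ = μ A := by rw [Tpow_zero hθ hf, lintegral_indicator_one hA]

lemma _root_.QInvariant.pInvariant_rStar (hst : IsPathStoppingTime τ) (hθ : ThetaCompatible M τ)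
    (hτ : ∀ x, EtauE M τ x ≠ ⊤) [IsFiniteMeasure ν] (hν : QInvariant M τ ν) :
    PInvariant M (rStar M τ ν) := by
  rintro f hf ⟨C, hC, hfC⟩
  have hfin : ∫⁻ x, f x ∂ν ≠ ⊤ := ((lintegral_mono hfC).trans_lt (lintegral_const_lt_top hC)).ne
  rw [lintegral_rStar hst hτ ν (measurable_Pop hf), lintegral_rStar hst hτ ν hf,
    ← ENNReal.add_left_inj hfin]
  calc ∫⁻ x, Rop M τ (Pop M f) x ∂ν + ∫⁻ x, f x ∂ν = ∫⁻ x, (Qop M τ f x + Rop M τ f x) ∂ν := by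
        rw [← lintegral_add_left (measurable_Rop hst hτ (measurable_Pop hf))]
        exact lintegral_congr fun x => Rop_Pop_add hst hθ (hτ x) hf
    _ = ∫⁻ x, Rop M τ f x ∂ν + ∫⁻ x, f x ∂ν := by
        rw [lintegral_add_left (measurable_Qop hst hθ hf), hν f hf ⟨C, hC, hfC⟩, add_comm]

lemma _root_.QInvariant.sStar_rStar (hst : IsPathStoppingTime τ) (hθ : ThetaCompatible M τ)
    (hτ : ∀ x, EtauE M τ x ≠ ⊤) (hν : QInvariant M τ ν) : sStar M τ (rStar M τ ν) = ν := by
  refine Measure.ext fun A hA => ?_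
  have hf : Measurable (A.indicator (1 : X → ℝ≥0∞)) := measurable_one.indicator hA
  rw [← lintegral_indicator_one hA, lintegral_sStar hst _ hf,
    lintegral_rStar hst hτ ν (measurable_Sop hst hf)]
  simp_rw [Rop_Sop hst hθ (hτ _) hf]
  rw [hν _ hf ⟨1, ENNReal.one_ne_top, indicator_le_self A 1⟩, lintegral_indicator_one hA]

end Correspondence

end MarkovChain

section Ergodicity

variable {Inv : Measure X → Prop} {μ : Measure X}

lemma eq_inv_measure_univ_smul_of_smul_eq {ν : Measure X} [IsProbabilityMeasure ν] {a c : ℝ≥0∞}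
    (ha₀ : a ≠ 0) (ha : a ≠ ⊤) (h : a • ν = c • μ) : ν = (μ univ)⁻¹ • μ := by
  have hmass : a = c * μ univ := by simpa using congrArg (· univ) h
  have hc₀ : c ≠ 0 := fun hc => ha₀ (by simp [hmass, hc])
  have hμ₀ : μ univ ≠ 0 := fun hμ => ha₀ (by simp [hmass, hμ])
  have hc : c ≠ ⊤ := fun hc => ha (by rw [hmass, hc, ENNReal.top_mul hμ₀])
  calc ν = a⁻¹ • (a • ν) := by rw [smul_smul, ENNReal.inv_mul_cancel ha₀ ha, one_smul]
    _ = (μ univ)⁻¹ • μ := by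
      rw [h, smul_smul, hmass, ENNReal.mul_inv (Or.inl hc₀) (Or.inl hc), mul_comm c⁻¹, mul_assoc,
        ENNReal.inv_mul_cancel hc₀ hc, mul_one]

lemma ergodicAmong_of_forall_eq_smul (hInv : ∀ (c : ℝ≥0∞) m, Inv m → Inv (c • m))
    [IsFiniteMeasure μ] (hμ₀ : μ ≠ 0)
    (h : ∀ m₁ m₂, Inv m₁ → Inv m₂ → IsFiniteMeasure m₁ → IsFiniteMeasure m₂ → μ = m₁ + m₂ →
      ∃ c : ℝ≥0∞, m₁ = c • μ) :
    ErgodicAmong Inv μ := by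
  refine ⟨hμ₀, fun ν₁ ν₂ t hν₁ hν₂ _ _ ht₀ ht₁ hμ => ?_⟩
  have hκ₀ : μ univ ≠ 0 := Measure.measure_univ_ne_zero.mpr hμ₀
  have hκ : μ univ ≠ ⊤ := measure_ne_top μ univ
  have ht : t ≠ ⊤ := ht₁.ne_top
  have h1t₀ : 1 - t ≠ 0 := (tsub_pos_of_lt ht₁).ne'
  have h1t : 1 - t ≠ ⊤ := ENNReal.sub_ne_top ENNReal.one_ne_top
  have hsplit : μ = (μ univ * t) • ν₁ + (μ univ * (1 - t)) • ν₂ := by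
    conv_lhs => rw [hμ]
    rw [smul_add, smul_smul, smul_smul]
  have hfin₁ := ν₁.smul_finite (ENNReal.mul_ne_top hκ ht)
  have hfin₂ := ν₂.smul_finite (ENNReal.mul_ne_top hκ h1t)
  obtain ⟨c₁, hc₁⟩ := h _ _ (hInv _ _ hν₁) (hInv _ _ hν₂) hfin₁ hfin₂ hsplit
  obtain ⟨c₂, hc₂⟩ := h _ _ (hInv _ _ hν₂) (hInv _ _ hν₁) hfin₂ hfin₁ (hsplit.trans (add_comm _ _))
  rw [eq_inv_measure_univ_smul_of_smul_eq (mul_ne_zero hκ₀ ht₀.ne') (ENNReal.mul_ne_top hκ ht) hc₁,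
    eq_inv_measure_univ_smul_of_smul_eq (mul_ne_zero hκ₀ h1t₀) (ENNReal.mul_ne_top hκ h1t) hc₂]

lemma ErgodicAmong.exists_eq_smul (hInv : ∀ (c : ℝ≥0∞) m, Inv m → Inv (c • m))
    (herg : ErgodicAmong Inv μ) {m₁ m₂ : Measure X} (h₁ : Inv m₁) (h₂ : Inv m₂)
    [IsFiniteMeasure m₁] [IsFiniteMeasure m₂] (hμ : μ = m₁ + m₂) : ∃ c : ℝ≥0∞, m₁ = c • μ := by
  rcases eq_zero_or_neZero m₁ with rfl | _
  · exact ⟨0, by simp⟩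
  rcases eq_zero_or_neZero m₂ with rfl | _
  · exact ⟨1, by simp [hμ]⟩
  have ha₁ : m₁ univ ≠ 0 := NeZero.ne _
  have ha₂ : m₂ univ ≠ 0 := NeZero.ne _
  have hs₀ : μ univ ≠ 0 := by simp [hμ, ha₁]
  have hs : μ univ ≠ ⊤ := by simp [hμ]
  have hmass : μ univ = m₁ univ + m₂ univ := by rw [hμ, Measure.add_apply]
  set t := m₁ univ / μ univ
  have ht : t ≠ ⊤ := ENNReal.div_ne_top (measure_ne_top _ _) hs₀
  have h1t : 1 - t = m₂ univ / μ univ := by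
    refine ENNReal.sub_eq_of_eq_add_rev ht ?_
    rw [ENNReal.div_add_div_same, ← hmass, ENNReal.div_self hs₀ hs]
  have hscale {m : Measure X} (hm : m univ ≠ 0) (hm' : m univ ≠ ⊤) :
      μ univ • ((m univ / μ univ) • ((m univ)⁻¹ • m)) = m := by
    rw [smul_smul, smul_smul, ENNReal.mul_div_cancel hs₀ hs, ENNReal.mul_inv_cancel hm hm',
      one_smul]
  have hdecomp : μ = μ univ • (t • ((m₁ univ)⁻¹ • m₁) + (1 - t) • ((m₂ univ)⁻¹ • m₂)) := by
    rw [h1t, smul_add, hscale ha₁ (measure_ne_top _ _), hscale ha₂ (measure_ne_top _ _), hμ]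
  have ht₀ : 0 < t := ENNReal.div_pos ha₁ hs
  have ht₁ : t < 1 := by
    rw [ENNReal.div_lt_iff (Or.inl hs₀) (Or.inl hs), one_mul, hmass]
    exact ENNReal.lt_add_right (measure_ne_top _ _) ha₂
  have heq := herg.2 _ _ t (hInv _ _ h₁) (hInv _ _ h₂) inferInstance inferInstance ht₀ ht₁ hdecomp
  refine ⟨t, ?_⟩
  rw [hdecomp, ← heq, ← add_smul, add_tsub_cancel_of_le ht₁.le, one_smul, smul_smul, smul_smul,
    ENNReal.div_mul_cancel hs₀ hs, ENNReal.mul_inv_cancel ha₁ (measure_ne_top _ _), one_smul]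

lemma ErgodicAmong.image {Inv₁ Inv₂ : Measure X → Prop} {F G : Measure X → Measure X}
    (hInv₁ : ∀ (c : ℝ≥0∞) m, Inv₁ m → Inv₁ (c • m)) (hInv₂ : ∀ (c : ℝ≥0∞) m, Inv₂ m → Inv₂ (c • m))
    (hF_smul : ∀ (c : ℝ≥0∞) m, F (c • m) = c • F m)
    (hG_add : ∀ m₁ m₂, G (m₁ + m₂) = G m₁ + G m₂) (hG_smul : ∀ (c : ℝ≥0∞) m, G (c • m) = c • G m)
    (hG : ∀ m [IsFiniteMeasure m], Inv₂ m → IsFiniteMeasure (G m) ∧ Inv₁ (G m) ∧ F (G m) = m)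
    {μ : Measure X} [IsFiniteMeasure (F μ)] (hGF : G (F μ) = μ) (herg : ErgodicAmong Inv₁ μ) :
    ErgodicAmong Inv₂ (F μ) := by
  have hG_zero : G 0 = 0 := by simpa using hG_smul 0 0
  refine ergodicAmong_of_forall_eq_smul hInv₂ (fun h => herg.1 (by rw [← hGF, h, hG_zero]))
    fun n₁ n₂ h₁ h₂ _ _ hsum => ?_
  obtain ⟨_, hG₁, hFG₁⟩ := hG n₁ h₁
  obtain ⟨_, hG₂, -⟩ := hG n₂ h₂
  obtain ⟨c, hc⟩ := herg.exists_eq_smul hInv₁ hG₁ hG₂ (by rw [← hGF, hsum, hG_add])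
  exact ⟨c, by rw [← hFG₁, hc, hF_smul]⟩

end Ergodicity

open MarkovChain

theorem stmt4_general
    (M : MarkovChain X) (τ : (ℕ → X) → ℕ∞)
    (hst : IsPathStoppingTime τ) (hθ : ThetaCompatible M τ)
    (hτ : ∀ x, EtauE M τ x ≠ ⊤)
    (hQR : ∃ C : ℝ≥0, ∀ x, Qop M τ (Rop M τ 1) x ≤ (C : ℝ≥0∞)) :
    (∀ μ : Measure X, IsFiniteMeasure μ → PInvariant M μ →
        ∃ ν : Measure X, IsFiniteMeasure ν ∧ QInvariant M τ ν ∧ SstarEq M τ μ ν ∧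
          RstarEq M τ ν μ) ∧
    (∀ ν : Measure X, IsFiniteMeasure ν → QInvariant M τ ν →
        ∃ μ : Measure X, IsFiniteMeasure μ ∧ PInvariant M μ ∧ RstarEq M τ ν μ ∧
          SstarEq M τ μ ν) ∧
    (∀ μ ν : Measure X, IsFiniteMeasure μ → PInvariant M μ → SstarEq M τ μ ν →
        ErgodicAmong (PInvariant M) μ → ErgodicAmong (QInvariant M τ) ν) ∧
    (∀ ν μ : Measure X, IsFiniteMeasure ν → QInvariant M τ ν → RstarEq M τ ν μ →
        ErgodicAmong (QInvariant M τ) ν → ErgodicAmong (PInvariant M) μ) := by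
  have hPQ (μ : Measure X) [IsFiniteMeasure μ] (hμ : PInvariant M μ) :
      IsFiniteMeasure (sStar M τ μ) ∧ QInvariant M τ (sStar M τ μ) ∧ rStar M τ (sStar M τ μ) = μ :=
    ⟨isFiniteMeasure_sStar hst μ, hμ.qInvariant_sStar hst hθ, hμ.rStar_sStar hst hθ hτ⟩
  have hQP (ν : Measure X) [IsFiniteMeasure ν] (hν : QInvariant M τ ν) :
      IsFiniteMeasure (rStar M τ ν) ∧ PInvariant M (rStar M τ ν) ∧ sStar M τ (rStar M τ ν) = ν :=
    ⟨isFiniteMeasure_rStar hst hτ hQR hν, hν.pInvariant_rStar hst hθ hτ, hν.sStar_rStar hst hθ hτ⟩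
  refine ⟨fun μ _ hμ => ?_, fun ν _ hν => ?_, fun μ ν _ hμ hS herg => ?_,
    fun ν μ _ hν hR herg => ?_⟩
  · obtain ⟨hfin, hQ, hRS⟩ := hPQ μ hμ
    exact ⟨_, hfin, hQ, (sstarEq_iff hst).2 rfl, (rstarEq_iff hst hτ).2 hRS.symm⟩
  · obtain ⟨hfin, hP, hSR⟩ := hQP ν hν
    exact ⟨_, hfin, hP, (rstarEq_iff hst hτ).2 rfl, (sstarEq_iff hst).2 hSR.symm⟩
  · obtain ⟨_, -, hRS⟩ := hPQ μ hμ
    rw [(sstarEq_iff hst).1 hS]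
    exact herg.image (fun c _ hm => hm.smul c) (fun c _ hm => hm.smul c) (sStar_smul hst)
      (rStar_add hst hτ) (rStar_smul hst hτ) hQP hRS
  · obtain ⟨_, -, hSR⟩ := hQP ν hν
    rw [(rstarEq_iff hst hτ).1 hR]
    exact herg.image (fun c _ hm => hm.smul c) (fun c _ hm => hm.smul c) (rStar_smul hst hτ)
      (sStar_add hst) (sStar_smul hst) hPQ hSR

/-- Corollary 1.10: `S*` and `R*` are reciprocal linear bijections between the finite
`P`-invariant measures and the finite `Q`-invariant ones, and they preserve ergodicity. -/
theorem stmt4 [MetricSpace X] [CompleteSpace X] [TopologicalSpace.SeparableSpace X] [BorelSpace X]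
    (M : MarkovChain X) (τ : (ℕ → X) → ℕ∞)
    (hst : IsPathStoppingTime τ) (hθ : ThetaCompatible M τ)
    (hτ : ∀ x, EtauE M τ x ≠ ⊤)
    (hQR : ∃ C : ℝ≥0, ∀ x, Qop M τ (Rop M τ 1) x ≤ (C : ℝ≥0∞)) :
    (∀ μ : Measure X, IsFiniteMeasure μ → PInvariant M μ →
        ∃ ν : Measure X, IsFiniteMeasure ν ∧ QInvariant M τ ν ∧ SstarEq M τ μ ν ∧
          RstarEq M τ ν μ) ∧
    (∀ ν : Measure X, IsFiniteMeasure ν → QInvariant M τ ν →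
        ∃ μ : Measure X, IsFiniteMeasure μ ∧ PInvariant M μ ∧ RstarEq M τ ν μ ∧
          SstarEq M τ μ ν) ∧
    (∀ μ ν : Measure X, IsFiniteMeasure μ → PInvariant M μ → SstarEq M τ μ ν →
        ErgodicAmong (PInvariant M) μ → ErgodicAmong (QInvariant M τ) ν) ∧
    (∀ ν μ : Measure X, IsFiniteMeasure ν → QInvariant M τ ν → RstarEq M τ ν μ →
        ErgodicAmong (QInvariant M τ) ν → ErgodicAmong (PInvariant M) μ) :=
  stmt4_general M τ hst hθ hτ hQR

end
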